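/- Let Q be a division ring with a discrete non-archimedean multiplicative valuation w taking values in {p^k : k ∈ Z} ∪ {0}. Then there exists a division ring extension Q ≤ Q' and an extension w' of w to a valuation on Q' such that Q' contains a central element z with w'(z) = p^{-1}. -/

import Mathlib

/-- A discrete non-archimedean multiplicative valuation on a division ring `Q`, with value
group contained in `{p^k : k ∈ ℤ} ∪ {0}`. -/
def IsDiscreteValuation (p : ℕ) {Q : Type} [DivisionRing Q] (w : Q → ℝ) : Prop :=
  (∀ q, w q = 0 ↔ q = 0) ∧ w 1 = 1 ∧ (∀ a b, w (a * b) = w a * w b) ∧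
    (∀ a b, w (a + b) ≤ max (w a) (w b)) ∧ (∀ q, q ≠ 0 → ∃ k : ℤ, w q = (p : ℝ) ^ k)

/-!
The Gauss norm `∑ qᵢ Xⁱ ↦ maxᵢ w(qᵢ) p⁻ⁱ` is a multiplicative ultrametric absolute value on
`Q[X]`, with values in `p^ℤ` and `‖X‖ = p⁻¹`. A dimension count over `Q` shows that `Q[X]` is an
Ore domain, so it has a division ring of fractions `Q'`, in which `X` stays central. Setting
`‖r / s‖ = ‖r‖ / ‖s‖` extends the Gauss norm to `Q'`; writing two fractions over a common
denominator reduces the ultrametric inequality on `Q'` to the one on `Q[X]`.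
-/

open Polynomial OreLocalization
open scoped nonZeroDivisors

namespace Polynomial

variable {R : Type*} [Semiring R]

theorem mul_mem_degreeLT {a : R[X]} {n : ℕ} (ha : a ∈ R[X]_n) (r : R[X]) :
    a * r ∈ R[X]_(n + r.natDegree) := by
  rw [mem_degreeLT] at ha ⊢
  calc (a * r).degree ≤ a.degree + r.degree := degree_mul_le a r
    _ ≤ a.degree + r.natDegree := add_le_add_right degree_le_natDegree _
    _ < n + r.natDegree := WithBot.add_lt_add_of_lt_of_le (WithBot.natCast_ne_bot _) ha le_rfl

theorem finrank_degreeLT (K : Type*) [DivisionRing K] (n : ℕ) : Module.finrank K K[X]_n = n := by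
  simpa using Module.finrank_eq_card_basis (degreeLT.basis K n)

variable {Q : Type*} [DivisionRing Q]

theorem exists_ne_zero_mul_eq_mul (r : Q[X]) {s : Q[X]} (hs : s ≠ 0) :
    ∃ a b : Q[X], a ≠ 0 ∧ a * r = b * s := by
  set m := r.natDegree + s.natDegree
  -- `(a, b) ↦ a * r - b * s` maps a space of dimension `2m + 2` into one of dimension `2m + 1`.
  let φ : Q[X]_(m + 1) × Q[X]_(m + 1) →ₗ[Q] Q[X] :=
    LinearMap.mulRight Q r ∘ₗ (Q[X]_(m + 1)).subtype ∘ₗ LinearMap.fst Q _ _ -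
    LinearMap.mulRight Q s ∘ₗ (Q[X]_(m + 1)).subtype ∘ₗ LinearMap.snd Q _ _
  have hφ : ∀ x, φ x ∈ Q[X]_(m + 1 + m) := fun x =>
    sub_mem (degreeLT_mono (by omega) (mul_mem_degreeLT x.1.2 r))
      (degreeLT_mono (by omega) (mul_mem_degreeLT x.2.2 s))
  have hker := LinearMap.ker_ne_bot_of_finrank_lt (f := φ.codRestrict _ hφ) (by
    simp only [Module.finrank_prod, finrank_degreeLT]; omega)
  obtain ⟨⟨a, b⟩, hab, hne⟩ := (Submodule.ne_bot_iff _).mp hker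
  have hab' : (a : Q[X]) * r = b * s := by
    simpa [φ, sub_eq_zero, Subtype.ext_iff] using hab
  refine ⟨a, b, fun ha => hne ?_, hab'⟩
  rw [ha, zero_mul, eq_comm, mul_eq_zero, or_iff_left hs] at hab'
  exact Prod.ext (Subtype.ext ha) (Subtype.ext hab')

noncomputable instance instOreSetNonZeroDivisors : OreSet Q[X]⁰ :=
  Classical.choice <| nonempty_oreSet_iff_of_noZeroDivisors.mpr fun r s => by
    obtain ⟨a, b, ha, h⟩ := exists_ne_zero_mul_eq_mul r (nonZeroDivisors.coe_ne_zero s)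
    exact ⟨b, ⟨a, mem_nonZeroDivisors_of_ne_zero ha⟩, h⟩

end Polynomial

namespace OreLocalization

theorem commute_numeratorHom {R : Type*} [Monoid R] {S : Submonoid R} [OreSet S] {r : R}
    (hr : ∀ a, Commute r a) (x : R[S⁻¹]) : Commute (numeratorHom r) x := by
  induction x with | _ a s
  have hx : a /ₒ s = (((numeratorUnit s)⁻¹ : R[S⁻¹]ˣ) : R[S⁻¹]) * numeratorHom a := by
    simp [numeratorUnit, numeratorHom_apply]
  rw [hx]
  exact ((hr s).map numeratorHom).units_inv_right.mul_right ((hr a).map numeratorHom)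

theorem exists_eq_oreDiv_and_eq_oreDiv {R : Type*} [Monoid R] {S : Submonoid R} [OreSet S]
    {X : Type*} [MulAction R X] (x y : X[S⁻¹]) :
    ∃ (a b : X) (s : S), x = a /ₒ s ∧ y = b /ₒ s := by
  induction x with | _ a s
  induction y with | _ b t
  have h := ore_eq (t : R) s
  refine ⟨oreNum (t : R) s • a, oreDenom (t : R) s • b, oreDenom (t : R) s * t, ?_,
    OreLocalization.expand' b t _⟩
  rw [OreLocalization.expand a s _ (by rw [← h]; exact (oreDenom (t : R) s * t).2)]
  congr 1
  exact Subtype.ext h.symm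

theorem oreDiv_eq_zero_iff {R : Type*} [Ring R] [OreSet R⁰] {r : R} {s : R⁰} : r /ₒ s = 0 ↔ r = 0 := by
  refine ⟨fun h => numeratorHom_inj (S := R⁰) (fun _ h => h.1) ?_,
    fun h => h ▸ zero_oreDiv s⟩
  rw [numeratorHom_apply, numeratorHom_apply, zero_oreDiv, ← OreLocalization.mul_cancel (s := s), h,
    mul_zero]

end OreLocalization

namespace AbsoluteValue

variable {R : Type*} [Ring R] [Nontrivial R] [OreSet R⁰] (v : AbsoluteValue R ℝ)

-- The universal property makes `r /ₒ s ↦ v r / v s` well defined and multiplicative.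
noncomputable def oreLocalizationHom : R[R⁰⁻¹] →* ℝ :=
  universalMulHom v.toMonoidHom
    (Units.liftRight (v.toMonoidHom.comp R⁰.subtype)
      (fun s => Units.mk0 (v s) (v.ne_zero (nonZeroDivisors.coe_ne_zero s))) fun _ => rfl)
    fun _ => rfl

theorem oreLocalizationHom_oreDiv (r : R) (s : R⁰) :
    v.oreLocalizationHom (r /ₒ s) = v r / v s := by
  rw [div_eq_inv_mul]
  rfl

noncomputable def oreLocalization : AbsoluteValue R[R⁰⁻¹] ℝ where
  __ := v.oreLocalizationHom
  nonneg' x := by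
    induction x with | _ r s
    change 0 ≤ v.oreLocalizationHom (r /ₒ s)
    rw [oreLocalizationHom_oreDiv]
    positivity
  eq_zero' x := by
    induction x with | _ r s
    change v.oreLocalizationHom (r /ₒ s) = 0 ↔ _
    rw [oreLocalizationHom_oreDiv, div_eq_zero_iff, v.eq_zero, oreDiv_eq_zero_iff,
      or_iff_left (v.ne_zero (nonZeroDivisors.coe_ne_zero s))]
  add_le' x y := by
    obtain ⟨a, b, s, rfl, rfl⟩ := exists_eq_oreDiv_and_eq_oreDiv x y
    change v.oreLocalizationHom _ ≤ v.oreLocalizationHom _ + v.oreLocalizationHom _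
    rw [add_oreDiv, oreLocalizationHom_oreDiv, oreLocalizationHom_oreDiv,
      oreLocalizationHom_oreDiv, ← add_div]
    gcongr
    exact v.add_le a b

@[simp]
theorem oreLocalization_oreDiv (r : R) (s : R⁰) : v.oreLocalization (r /ₒ s) = v r / v s :=
  v.oreLocalizationHom_oreDiv r s

theorem isNonarchimedean_oreLocalization (hv : IsNonarchimedean v) :
    IsNonarchimedean v.oreLocalization := by
  intro x y
  obtain ⟨a, b, s, rfl, rfl⟩ := exists_eq_oreDiv_and_eq_oreDiv x y
  rw [add_oreDiv]
  simp only [oreLocalization_oreDiv]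
  rw [max_div_div_right (v.nonneg _)]
  gcongr
  exact hv a b

theorem exists_oreLocalization_eq_zpow {b : ℝ} (hb : b ≠ 0)
    (hv : ∀ r : R, r ≠ 0 → ∃ k : ℤ, v r = b ^ k) {x : R[R⁰⁻¹]} (hx : x ≠ 0) :
    ∃ k : ℤ, v.oreLocalization x = b ^ k := by
  induction x with | _ r s
  obtain ⟨k, hk⟩ := hv r fun hr => hx (oreDiv_eq_zero_iff.mpr hr)
  obtain ⟨l, hl⟩ := hv s (nonZeroDivisors.coe_ne_zero s)
  exact ⟨k - l, by rw [oreLocalization_oreDiv, hk, hl, zpow_sub₀ hb]⟩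

end AbsoluteValue

namespace Polynomial

variable {R : Type*} [Ring R] {v : AbsoluteValue R ℝ} {c : ℝ}

noncomputable def gaussNormAbv (hv : IsNonarchimedean v) (hc : 0 < c) : AbsoluteValue R[X] ℝ :=
  have := gaussNorm_isAbsoluteValue hv hc
  IsAbsoluteValue.toAbsoluteValue (gaussNorm v c)

@[simp]
theorem gaussNormAbv_apply (hv : IsNonarchimedean v) (hc : 0 < c) (f : R[X]) :
    gaussNormAbv hv hc f = f.gaussNorm v c :=
  rfl

theorem isNonarchimedean_gaussNormAbv (hv : IsNonarchimedean v) (hc : 0 < c) :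
    IsNonarchimedean (gaussNormAbv hv hc) :=
  isNonarchimedean_gaussNorm v hv hc.le

theorem exists_gaussNorm_eq_zpow {b : ℝ} (hb : 0 < b) (hv : ∀ a : R, a ≠ 0 → ∃ k : ℤ, v a = b ^ k)
    {f : R[X]} (hf : f ≠ 0) : ∃ k : ℤ, f.gaussNorm v b⁻¹ = b ^ k := by
  obtain ⟨i, hi⟩ := exists_eq_gaussNorm v b⁻¹ f
  have hfi : f.coeff i ≠ 0 := by
    intro h
    rw [h, map_zero, zero_mul] at hi
    exact hf ((gaussNorm_eq_zero_iff v f (fun _ => v.eq_zero.mp) (inv_pos.mpr hb)).mp hi)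
  obtain ⟨k, hk⟩ := hv _ hfi
  exact ⟨k - i, by rw [hi, hk, inv_pow, zpow_sub₀ hb.ne', zpow_natCast, div_eq_mul_inv]⟩

end Polynomial

namespace IsDiscreteValuation

variable {p : ℕ} {Q : Type} [DivisionRing Q] {w : Q → ℝ}

theorem nonneg (hw : IsDiscreteValuation p w) (hp : 0 < p) (q : Q) : 0 ≤ w q := by
  rcases eq_or_ne q 0 with rfl | hq
  · exact ((hw.1 0).mpr rfl).ge
  · obtain ⟨k, hk⟩ := hw.2.2.2.2 q hq
    rw [hk]
    positivity

def toAbsoluteValue (hw : IsDiscreteValuation p w) (hp : 0 < p) : AbsoluteValue Q ℝ where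
  toFun := w
  map_mul' := hw.2.2.1
  nonneg' := hw.nonneg hp
  eq_zero' := hw.1
  add_le' _ _ := IsNonarchimedean.add_le (hw.nonneg hp) hw.2.2.2.1

@[simp]
theorem toAbsoluteValue_apply (hw : IsDiscreteValuation p w) (hp : 0 < p) (q : Q) :
    hw.toAbsoluteValue hp q = w q :=
  rfl

theorem isNonarchimedean_toAbsoluteValue (hw : IsDiscreteValuation p w) (hp : 0 < p) :
    IsNonarchimedean (hw.toAbsoluteValue hp) :=
  hw.2.2.2.1

end IsDiscreteValuation

theorem AbsoluteValue.isDiscreteValuation {p : ℕ} {D : Type} [DivisionRing D]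
    (v : AbsoluteValue D ℝ) (hv : IsNonarchimedean v)
    (hd : ∀ x : D, x ≠ 0 → ∃ k : ℤ, v x = (p : ℝ) ^ k) : IsDiscreteValuation p v :=
  ⟨fun _ => v.eq_zero, v.map_one, v.map_mul, hv, hd⟩

/-- Let `Q` be a division ring with a discrete non-archimedean multiplicative valuation `w`
taking values in `{p^k : k ∈ ℤ} ∪ {0}`.  Then there exists a division ring extension
`Q ≤ Q'` and an extension `w'` of `w` to a valuation on `Q'` such that `Q'` contains a central
element `z` with `w' z = p⁻¹`. -/
theorem valuation_extension_central_uniformizer (p : ℕ) [Fact p.Prime] {Q : Type}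
    [DivisionRing Q] (w : Q → ℝ) (hw : IsDiscreteValuation p w) :
    ∃ (Q' : Type) (_ : DivisionRing Q') (j : Q →+* Q') (w' : Q' → ℝ),
      Function.Injective j ∧ IsDiscreteValuation p w' ∧ (∀ q, w' (j q) = w q) ∧
      ∃ z : Q', (∀ x : Q', z * x = x * z) ∧ w' z = (p : ℝ)⁻¹ := by
  have hp : 0 < p := (Fact.out : p.Prime).pos
  have hpR : (0 : ℝ) < p := Nat.cast_pos.mpr hp
  have hv := hw.isNonarchimedean_toAbsoluteValue hp
  let W := gaussNormAbv hv (inv_pos.mpr hpR)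
  refine ⟨Q[X][Q[X]⁰⁻¹], inferInstance, numeratorRingHom.comp C, W.oreLocalization,
    RingHom.injective _, ?_, fun q => ?_, numeratorHom X, commute_numeratorHom commute_X, ?_⟩
  · exact W.oreLocalization.isDiscreteValuation
      (W.isNonarchimedean_oreLocalization (isNonarchimedean_gaussNormAbv hv _))
      fun _ => W.exists_oreLocalization_eq_zpow hpR.ne'
        fun _ => exists_gaussNorm_eq_zpow hpR hw.2.2.2.2
  · simp [W]
  · simp [W, numeratorHom_apply, ← monomial_one_one_eq_X]
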